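/- arXiv:2605.10909 — 3 statements merged into one kernel-verified Lean document; each statement's English description precedes it below -/
import Mathlib

section
/- Let {π̃_α} be a parametrized family of correlated policies such that J^{π̃_α,k}(μ) is differentiable with respect to α and π̃_α(π_det) > 0 for all π_det. Then ∇_α J^{π̃_α,k}(μ) = (1/(1−γ^k)) · E_{s ∼ d_μ^{π̃_α,k}} [ E_{π_det ∼ π̃_α} [ Q^{π̃_α,k}(s, π_det) · ∇_α log π̃_α(π_det) ] ]. (k-step Policy Gradient Theorem.) -/
open Finset

noncomputable section

variable {S A D : Type*} [Fintype S] [Fintype A] [Fintype D] [DecidableEq S]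

/-- Transition matrix of a deterministic policy `pol`. -/
def detKernel (P : S → A → S → ℝ) (pol : S → A) : Matrix S S ℝ :=
  Matrix.of fun s s' => P s (pol s) s'

/-- Expected discounted cost incurred during the first `k` steps when following the
deterministic policy `pol` starting from state `s`. -/
def detCost (P : S → A → S → ℝ) (g : S → A → ℝ) (γ : ℝ) (pol : S → A) (k : ℕ) (s : S) : ℝ :=
  ∑ t ∈ Finset.range k, γ ^ t * ∑ s', (detKernel P pol ^ t) s s' * g s' (pol s')

/-- Value function `J^{π_det}(s)` of a deterministic policy. -/
def detJ (P : S → A → S → ℝ) (g : S → A → ℝ) (γ : ℝ) (pol : S → A) (s : S) : ℝ :=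
  ∑' t : ℕ, γ ^ t * ∑ s', (detKernel P pol ^ t) s s' * g s' (pol s')

/-- Value `J^{π_det}(μ)` of a deterministic policy from an initial distribution `μ`. -/
def detJInit (P : S → A → S → ℝ) (g : S → A → ℝ) (γ : ℝ) (pol : S → A) (μ : S → ℝ) : ℝ :=
  ∑ s, μ s * detJ P g γ pol s

/-- The `k`-step transition kernel of the correlated policy with weights `w`
over the family `p` of deterministic policies. -/
def corKernel (P : S → A → S → ℝ) (p : D → S → A) (w : D → ℝ) (k : ℕ) : Matrix S S ℝ :=
  ∑ d, w d • (detKernel P (p d) ^ k)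

/-- Expected discounted cost of one `k`-step block of the correlated policy from `s`. -/
def blockCost (P : S → A → S → ℝ) (g : S → A → ℝ) (γ : ℝ) (p : D → S → A) (w : D → ℝ)
    (k : ℕ) (s : S) : ℝ :=
  ∑ d, w d * detCost P g γ (p d) k s

/-- The `k`-step value function `J^{π̃,k}(s)` of the correlated policy `w`. -/
def Jk (P : S → A → S → ℝ) (g : S → A → ℝ) (γ : ℝ) (p : D → S → A) (w : D → ℝ)
    (k : ℕ) (s : S) : ℝ :=
  ∑' m : ℕ, γ ^ (m * k) * ∑ s', (corKernel P p w k ^ m) s s' * blockCost P g γ p w k s'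

/-- `J^{π̃,k}(μ)`. -/
def JkInit (P : S → A → S → ℝ) (g : S → A → ℝ) (γ : ℝ) (p : D → S → A) (w : D → ℝ)
    (k : ℕ) (μ : S → ℝ) : ℝ :=
  ∑ s, μ s * Jk P g γ p w k s

/-- The `k`-step Q-function `Q^{π̃,k}(s, π')` with deterministic second argument `pol`. -/
def Qk (P : S → A → S → ℝ) (g : S → A → ℝ) (γ : ℝ) (p : D → S → A) (w : D → ℝ)
    (k : ℕ) (s : S) (pol : S → A) : ℝ :=
  detCost P g γ pol k s + γ ^ k * ∑ s', (detKernel P pol ^ k) s s' * Jk P g γ p w k s'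

/-- The `k`-step Q-function `Q^{π̃,k}(s, π̃')` with correlated second argument `w'`. -/
def QkCor (P : S → A → S → ℝ) (g : S → A → ℝ) (γ : ℝ) (p : D → S → A) (w : D → ℝ)
    (k : ℕ) (s : S) (w' : D → ℝ) : ℝ :=
  ∑ d, w' d * Qk P g γ p w k s (p d)

/-- The `k`-step discounted state occupancy measure `d_μ^{π̃,k}(s)`. -/
def dOcc (P : S → A → S → ℝ) (γ : ℝ) (p : D → S → A) (w : D → ℝ) (k : ℕ)
    (μ : S → ℝ) (s : S) : ℝ :=
  (1 - γ ^ k) * ∑' m : ℕ, γ ^ (m * k) * ∑ s0, μ s0 * (corKernel P p w k ^ m) s0 s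


/-! With `K_d` the `k`-step kernel of the `d`-th deterministic policy and `c_d` its `k`-step
cost, the block kernel `M(v) = ∑ v_d K_d` and the block cost `c(v) = ∑ v_d c_d` are linear in
the weights `v`. Whenever `‖γ^k M(v)‖ < 1` in the ℓ∞ operator norm, the Neumann series gives
`J = R c(v)` and `d_μ = (1 - γ^k) μᵀ R` with `R = (1 - γ^k M(v))⁻¹`. Stochastic matrices have
ℓ∞ operator norm `≤ 1`, so the condition holds at a probability vector, hence near it.
Differentiating the resolvent, `∂_{v_d} μᵀ R c = μᵀ R (c_d + γ^k K_d R c) = ∑_s (μᵀ R)(s) Q(s, d)`;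
the chain rule through `α ↦ π̃_α` and `∇ π̃_α(d) = π̃_α(d) ∇ log π̃_α(d)` give the theorem. -/

attribute [local instance] Matrix.linftyOpNormedRing Matrix.linftyOpNormedAlgebra

open Matrix

section LinftyOpNorm

variable {n : Type*} [Fintype n] [DecidableEq n]

theorem Matrix.linfty_opNorm_le_one_of_mem_rowStochastic {M : Matrix n n ℝ}
    (hM : M ∈ rowStochastic ℝ n) : ‖M‖ ≤ 1 := by
  rw [← NNReal.coe_one, ← coe_nnnorm, NNReal.coe_le_coe, linfty_opNNNorm_def]
  refine Finset.sup_le fun i _ => le_of_eq (NNReal.eq ?_)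
  simpa [Real.norm_of_nonneg (nonneg_of_mem_rowStochastic hM)] using
    sum_row_of_mem_rowStochastic hM i

theorem Matrix.isBoundedBilinearMap_mulVec :
    IsBoundedBilinearMap ℝ fun q : Matrix n n ℝ × (n → ℝ) => q.1 *ᵥ q.2 where
  add_left _ _ _ := add_mulVec _ _ _
  smul_left _ _ _ := smul_mulVec _ _ _
  add_right _ _ _ := mulVec_add _ _ _
  smul_right _ _ _ := mulVec_smul _ _ _
  bound := ⟨1, one_pos, fun A v => by simpa using linfty_opNorm_mulVec A v⟩

variable {X : Matrix n n ℝ}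

theorem Matrix.hasSum_pow_mulVec_apply (hX : ‖X‖ < 1) (c : n → ℝ) (i : n) :
    HasSum (fun m => (X ^ m *ᵥ c) i) ((Ring.inverse (1 - X) *ᵥ c) i) :=
  hasSum_sum fun j _ =>
    (Pi.hasSum.mp (Pi.hasSum.mp (hasSum_geom_series_inverse X hX) i) j).mul_right (c j)

theorem Matrix.hasSum_vecMul_pow_apply (hX : ‖X‖ < 1) (μ : n → ℝ) (j : n) :
    HasSum (fun m => (μ ᵥ* X ^ m) j) ((μ ᵥ* Ring.inverse (1 - X)) j) :=
  hasSum_sum fun i _ =>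
    (Pi.hasSum.mp (Pi.hasSum.mp (hasSum_geom_series_inverse X hX) i) j).mul_left (μ i)

end LinftyOpNorm

open ContinuousLinearMap in
theorem hasFDerivAt_ringInverse_one_sub {𝕜 E 𝔸 : Type*} [NontriviallyNormedField 𝕜]
    [NormedAddCommGroup E] [NormedSpace 𝕜 E] [NormedRing 𝔸] [NormedAlgebra 𝕜 𝔸]
    [HasSummableGeomSeries 𝔸] (T : E →L[𝕜] 𝔸) {x : E} (hx : ‖T x‖ < 1) :
    HasFDerivAt (fun y => Ring.inverse (1 - T y))
      ((mulLeftRight 𝕜 𝔸 (Ring.inverse (1 - T x)) (Ring.inverse (1 - T x))).comp T) x := by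
  have h := (hasFDerivAt_ringInverse (𝕜 := 𝕜) (Units.oneSub (T x) hx)).comp x
    (T.hasFDerivAt.const_sub 1)
  rw [← NormedRing.inverse_one_sub _ hx, neg_comp, comp_neg, neg_neg] at h
  exact h

section KStep

omit [Fintype A]

def discountedVisits (P : S → A → S → ℝ) (γ : ℝ) (p : D → S → A) (w : D → ℝ) (k : ℕ)
    (μ : S → ℝ) (s : S) : ℝ :=
  ∑' m : ℕ, γ ^ (m * k) * ∑ s0, μ s0 * (corKernel P p w k ^ m) s0 s

variable {P : S → A → S → ℝ} {g : S → A → ℝ} {γ : ℝ} {p : D → S → A} {k : ℕ}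

theorem detKernel_mem_rowStochastic (hP : ∀ s a, (∀ s', 0 ≤ P s a s') ∧ ∑ s', P s a s' = 1)
    (pol : S → A) : detKernel P pol ∈ rowStochastic ℝ S :=
  mem_rowStochastic_iff_sum.mpr ⟨fun s s' => (hP s (pol s)).1 s', fun s => (hP s (pol s)).2⟩

theorem norm_smul_corKernel_lt_one (hK : ∀ d, detKernel P (p d) ∈ rowStochastic ℝ S)
    (hγ0 : 0 ≤ γ) (hγk : γ ^ k < 1) {v : D → ℝ} (hv : ∀ d, 0 ≤ v d) (hv1 : ∑ d, v d = 1) :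
    ‖γ ^ k • corKernel P p v k‖ < 1 := by
  have hM : ‖corKernel P p v k‖ ≤ 1 := by
    refine (norm_sum_le _ _).trans ((Finset.sum_le_sum fun d _ => ?_).trans hv1.le)
    rw [norm_smul, Real.norm_of_nonneg (hv d)]
    exact mul_le_of_le_one_right (hv d)
      (linfty_opNorm_le_one_of_mem_rowStochastic (pow_mem (hK d) k))
  rw [norm_smul, Real.norm_of_nonneg (pow_nonneg hγ0 k)]
  exact (mul_le_of_le_one_right (pow_nonneg hγ0 k) hM).trans_lt hγk

theorem Jk_eq_inverse_mulVec {v : D → ℝ} (hv : ‖γ ^ k • corKernel P p v k‖ < 1) :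
    Jk P g γ p v k
      = Ring.inverse (1 - γ ^ k • corKernel P p v k) *ᵥ blockCost P g γ p v k := by
  funext s
  refine Eq.trans (tsum_congr fun m => ?_) (hasSum_pow_mulVec_apply hv _ s).tsum_eq
  rw [smul_pow, smul_mulVec, Pi.smul_apply, smul_eq_mul, ← pow_mul, mul_comm k]
  rfl

theorem JkInit_eq_dotProduct_inverse_mulVec {v : D → ℝ}
    (hv : ‖γ ^ k • corKernel P p v k‖ < 1) (μ : S → ℝ) :
    JkInit P g γ p v k μ
      = μ ⬝ᵥ (Ring.inverse (1 - γ ^ k • corKernel P p v k) *ᵥ blockCost P g γ p v k) := by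
  rw [← Jk_eq_inverse_mulVec hv]
  rfl

theorem dOcc_eq_mul_discountedVisits (w : D → ℝ) (μ : S → ℝ) (s : S) :
    dOcc P γ p w k μ s = (1 - γ ^ k) * discountedVisits P γ p w k μ s :=
  rfl

theorem discountedVisits_eq_vecMul_inverse {v : D → ℝ}
    (hv : ‖γ ^ k • corKernel P p v k‖ < 1) (μ : S → ℝ) :
    discountedVisits P γ p v k μ = μ ᵥ* Ring.inverse (1 - γ ^ k • corKernel P p v k) := by
  funext s
  refine Eq.trans (tsum_congr fun m => ?_) (hasSum_vecMul_pow_apply hv μ s).tsum_eq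
  rw [smul_pow, vecMul_smul, Pi.smul_apply, smul_eq_mul, ← pow_mul, mul_comm k]
  rfl

theorem QkCor_eq_blockCost_add_mulVec_Jk (w u : D → ℝ) (s : S) :
    QkCor P g γ p w k s u
      = (blockCost P g γ p u k + (γ ^ k • corKernel P p u k) *ᵥ Jk P g γ p w k) s := by
  simp only [QkCor, Qk, blockCost, corKernel, Pi.add_apply, smul_mulVec, sum_mulVec,
    Pi.smul_apply, Finset.sum_apply, smul_eq_mul, mulVec, dotProduct, mul_add,
    Finset.sum_add_distrib, Finset.mul_sum]
  exact congrArg _ (Finset.sum_congr rfl fun d _ => Finset.sum_congr rfl fun s' _ => by ring)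

open ContinuousLinearMap Filter Topology in
theorem hasFDerivAt_JkInit {v₀ : D → ℝ} (hv₀ : ‖γ ^ k • corKernel P p v₀ k‖ < 1)
    (μ : S → ℝ) :
    HasFDerivAt (fun v => JkInit P g γ p v k μ)
      (∑ d, (∑ s, discountedVisits P γ p v₀ k μ s * Qk P g γ p v₀ k s (p d)) •
        (proj d : (D → ℝ) →L[ℝ] ℝ)) v₀ := by
  let T : (D → ℝ) →L[ℝ] Matrix S S ℝ :=
    γ ^ k • ∑ d, (proj d : (D → ℝ) →L[ℝ] ℝ).smulRight (detKernel P (p d) ^ k)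
  let C : (D → ℝ) →L[ℝ] (S → ℝ) :=
    ∑ d, (proj d : (D → ℝ) →L[ℝ] ℝ).smulRight (detCost P g γ (p d) k)
  have hT : ∀ v, T v = γ ^ k • corKernel P p v k := fun v => by simp [T, corKernel]
  have hC : ∀ v, C v = blockCost P g γ p v k := fun v => by funext s; simp [C, blockCost]
  set R₀ := Ring.inverse (1 - T v₀)
  have hRC := (isBoundedBilinearMap_mulVec.hasFDerivAt (R₀, C v₀)).comp v₀
    ((hasFDerivAt_ringInverse_one_sub T (hT v₀ ▸ hv₀)).prodMk C.hasFDerivAt)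
  have hF := (LinearMap.toContinuousLinearMap (dotProductBilin ℝ ℝ μ)).hasFDerivAt.comp v₀ hRC
  have hnear : ∀ᶠ v in 𝓝 v₀, ‖T v‖ < 1 :=
    T.continuous.norm.continuousAt.eventually_lt continuousAt_const (hT v₀ ▸ hv₀)
  refine (hF.congr_of_eventuallyEq ?_).congr_fderiv ?_
  · filter_upwards [hnear] with v hv
    rw [hT] at hv
    rw [JkInit_eq_dotProduct_inverse_mulVec hv, ← hT, ← hC]
    rfl
  · have hν := discountedVisits_eq_vecMul_inverse hv₀ μ
    have hJ := Jk_eq_inverse_mulVec (g := g) hv₀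
    rw [← hT] at hν hJ
    ext u
    show μ ⬝ᵥ (R₀ *ᵥ C u + (R₀ * T u * R₀) *ᵥ C v₀) = _
    rw [← mulVec_mulVec, ← mulVec_mulVec, dotProduct_add, dotProduct_mulVec, dotProduct_mulVec,
      ← hν, hC, hC, ← hJ, ← dotProduct_add, hT]
    simp only [_root_.sum_apply, _root_.smul_apply, proj_apply, smul_eq_mul, dotProduct,
      ← QkCor_eq_blockCost_add_mulVec_Jk, QkCor, Finset.mul_sum, Finset.sum_mul]
    rw [Finset.sum_comm]
    exact Finset.sum_congr rfl fun d _ => Finset.sum_congr rfl fun s _ => by ring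

end KStep

theorem kstep_policy_gradient_theorem_general
    (P : S → A → S → ℝ) (g : S → A → ℝ) (γ : ℝ) (μ : S → ℝ)
    (p : D → S → A) (k : ℕ) (n : ℕ)
    (U : Set (EuclideanSpace ℝ (Fin n)))
    (w : EuclideanSpace ℝ (Fin n) → D → ℝ) (α₀ : EuclideanSpace ℝ (Fin n))
    (hP : ∀ s a, (∀ s', 0 ≤ P s a s') ∧ ∑ s', P s a s' = 1)
    (hγ0 : 0 < γ) (hγ1 : γ < 1)
    (hk : 1 ≤ k)
    (hα₀ : α₀ ∈ U)
    (hw_pos : ∀ α ∈ U, ∀ d, 0 < w α d)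
    (hw_dist : ∀ α ∈ U, ∑ d, w α d = 1)
    (hw_diff : ∀ α ∈ U, ∀ d, DifferentiableAt ℝ (fun b => w b d) α) :
    fderiv ℝ (fun α => JkInit P g γ p (w α) k μ) α₀ =
      (1 / (1 - γ ^ k)) •
        ∑ s : S, ∑ d : D,
          (dOcc P γ p (w α₀) k μ s * (w α₀ d * Qk P g γ p (w α₀) k s (p d))) •
            fderiv ℝ (fun α => Real.log (w α d)) α₀ := by
  have hw₀ : ∀ d, 0 < w α₀ d := hw_pos α₀ hα₀
  have hγk : γ ^ k < 1 := pow_lt_one₀ hγ0.le hγ1 (by omega)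
  have hv₀ : ‖γ ^ k • corKernel P p (w α₀) k‖ < 1 :=
    norm_smul_corKernel_lt_one (fun d => detKernel_mem_rowStochastic hP _) hγ0.le hγk
      (fun d => (hw₀ d).le) (hw_dist α₀ hα₀)
  have hW : HasFDerivAt w (ContinuousLinearMap.pi fun d => fderiv ℝ (fun α => w α d) α₀) α₀ :=
    hasFDerivAt_pi.2 fun d => (hw_diff α₀ hα₀ d).hasFDerivAt
  have hJ : HasFDerivAt (fun α => JkInit P g γ p (w α) k μ) _ α₀ :=
    (hasFDerivAt_JkInit hv₀ μ).comp α₀ hW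
  have hlog : ∀ d, fderiv ℝ (fun α => Real.log (w α d)) α₀
      = (w α₀ d)⁻¹ • fderiv ℝ (fun α => w α d) α₀ := fun d =>
    ((hw_diff α₀ hα₀ d).hasFDerivAt.log (hw₀ d).ne').fderiv
  have hγk' : 1 - γ ^ k ≠ 0 := (sub_pos.2 hγk).ne'
  rw [hJ.fderiv]
  ext h
  simp only [ContinuousLinearMap.comp_apply, ContinuousLinearMap.coe_pi', _root_.sum_apply,
    _root_.smul_apply, ContinuousLinearMap.proj_apply, smul_eq_mul, hlog,
    dOcc_eq_mul_discountedVisits, one_div, Finset.mul_sum, Finset.sum_mul]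
  rw [Finset.sum_comm]
  refine Finset.sum_congr rfl fun s _ => Finset.sum_congr rfl fun d _ => ?_
  field_simp [(hw₀ d).ne']

/-- **k-step Policy Gradient Theorem.** For a family of correlated policies `w α`
parametrized by `α` ranging over an open subset `U` of `ℝ^n`, with `w α ∈ Δ(Π_det)`,
`w α d > 0` differentiable in `α`, and with `J^{π̃_α,k}(μ)` differentiable with respect
to `α`, the gradient of the `k`-step value satisfies
`∇_α J^{π̃_α,k}(μ) = (1/(1−γ^k)) E_{s ∼ d_μ^{π̃_α,k}} E_{π_det ∼ π̃_α}
  [Q^{π̃_α,k}(s, π_det) ∇_α log π̃_α(π_det)]`. -/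
theorem kstep_policy_gradient_theorem
    (P : S → A → S → ℝ) (g : S → A → ℝ) (γ gmax : ℝ) (μ : S → ℝ)
    (p : D → S → A) (k : ℕ) (n : ℕ)
    (U : Set (EuclideanSpace ℝ (Fin n)))
    (w : EuclideanSpace ℝ (Fin n) → D → ℝ) (α₀ : EuclideanSpace ℝ (Fin n))
    (hP : ∀ s a, (∀ s', 0 ≤ P s a s') ∧ ∑ s', P s a s' = 1)
    (hg : ∀ s a, |g s a| ≤ gmax)
    (hγ0 : 0 < γ) (hγ1 : γ < 1)
    (hμ : μ ∈ stdSimplex ℝ S)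
    (hk : 1 ≤ k)
    (hU : IsOpen U) (hα₀ : α₀ ∈ U)
    (hw_pos : ∀ α ∈ U, ∀ d, 0 < w α d)
    (hw_dist : ∀ α ∈ U, ∑ d, w α d = 1)
    (hw_diff : ∀ α ∈ U, ∀ d, DifferentiableAt ℝ (fun b => w b d) α)
    (hJ_diff : DifferentiableAt ℝ (fun α => JkInit P g γ p (w α) k μ) α₀) :
    fderiv ℝ (fun α => JkInit P g γ p (w α) k μ) α₀ =
      (1 / (1 - γ ^ k)) •
        ∑ s : S, ∑ d : D,
          (dOcc P γ p (w α₀) k μ s * (w α₀ d * Qk P g γ p (w α₀) k s (p d))) •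
            fderiv ℝ (fun α => Real.log (w α d)) α₀ :=
  kstep_policy_gradient_theorem_general P g γ μ p k n U w α₀ hP hγ0 hγ1 hk hα₀ hw_pos hw_dist
    hw_diff
end
end

section
/- Let f be a differentiable, β-smooth function (with respect to a norm ‖·‖) on a compact convex set C in a finite-dimensional normed space, let Φ be a differentiable, λ-strongly convex mirror map on C with Bregman divergence D_Φ, and let x_0, x_1, …, x_T be the mirror descent iterates x_{t+1} = argmin_{x ∈ C} ⟨∇f(x_t), x⟩ + (1/η) D_Φ(x, x_t) with η = λ/β. Then for any fixed x^* ∈ C, (1/T) Σ_{t=0}^{T−1} (−⟨∇f(x_t), x^* − x_t⟩) ≤ (1/T)·(β/λ)·D_Φ(x^*, x_0) − (1/T) Σ_{t=0}^{T−1} (f(x_{t+1}) − f(x_t)). -/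
/-! Optimality of each mirror step, via the three-point identity for Bregman divergences, gives
`⟨∇f(x_t), x_{t+1} - x^*⟩ ≤ (1/η) (D(x^*, x_t) - D(x^*, x_{t+1}) - D(x_{t+1}, x_t))`.
With `η = λ/β`, strong convexity gives `D(x_{t+1}, x_t)/η ≥ (β/2) ‖x_{t+1} - x_t‖²`, which absorbs
the quadratic term of the smoothness bound for `f(x_{t+1}) - f(x_t)`. The resulting per-step
inequality telescopes, and the last divergence `D(x^*, x_T)` is nonnegative. -/

noncomputable section

/-- Bregman divergence `D_Φ(x,y) = Φ(x) − Φ(y) − ⟨∇Φ(y), x − y⟩`, where the pairing with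
the gradient of the differentiable mirror map `Φ` is expressed via its Fréchet derivative. -/
def breg {E : Type*} [NormedAddCommGroup E] [NormedSpace ℝ E] (Φ : E → ℝ) (x y : E) : ℝ :=
  Φ x - Φ y - fderiv ℝ Φ y (x - y)

section Bregman

variable {E : Type*} [NormedAddCommGroup E] [NormedSpace ℝ E] {Φ : E → ℝ}

theorem breg_sub_breg_sub_breg (Φ : E → ℝ) (z p q : E) :
    breg Φ z q - breg Φ z p - breg Φ p q = (fderiv ℝ Φ p - fderiv ℝ Φ q) (z - p) := by
  have hsplit : z - q = (z - p) + (p - q) := by abel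
  simp only [breg, hsplit, map_add, sub_apply]
  ring

theorem mul_sq_norm_le_breg {lam : ℝ} {a b : E}
    (hsc : Φ a + fderiv ℝ Φ a (b - a) + lam / 2 * ‖b - a‖ ^ 2 ≤ Φ b) :
    lam / 2 * ‖b - a‖ ^ 2 ≤ breg Φ b a := by
  unfold breg
  linarith

theorem breg_nonneg {lam : ℝ} (hlam : 0 ≤ lam) {a b : E}
    (hsc : Φ a + fderiv ℝ Φ a (b - a) + lam / 2 * ‖b - a‖ ^ 2 ≤ Φ b) :
    0 ≤ breg Φ b a :=
  (by positivity : 0 ≤ lam / 2 * ‖b - a‖ ^ 2).trans (mul_sq_norm_le_breg hsc)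

theorem hasFDerivAt_breg_left {p : E} (hΦ : DifferentiableAt ℝ Φ p) (q : E) :
    HasFDerivAt (fun y => breg Φ y q) (fderiv ℝ Φ p - fderiv ℝ Φ q) p := by
  have hlin : HasFDerivAt (fun y => fderiv ℝ Φ q (y - q)) (fderiv ℝ Φ q) p := by
    simpa only [map_sub] using (fderiv ℝ Φ q).hasFDerivAt.sub_const (fderiv ℝ Φ q q)
  exact (hΦ.hasFDerivAt.sub_const (Φ q)).sub hlin

end Bregman

section MirrorStep

variable {E : Type*} [NormedAddCommGroup E] [NormedSpace ℝ E]
  {C : Set E} {Φ : E → ℝ} {c : E →L[ℝ] ℝ} {η : ℝ} {p q z : E}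

theorem mirror_step_optimality (hC : Convex ℝ C) (hΦ : DifferentiableAt ℝ Φ p)
    (hp : p ∈ C) (hz : z ∈ C)
    (hmin : IsMinOn (fun y => c y + (1 / η) * breg Φ y q) C p) :
    0 ≤ c (z - p) + (1 / η) * (fderiv ℝ Φ p - fderiv ℝ Φ q) (z - p) := by
  have hderiv := (c.hasFDerivAt (x := p)).add ((hasFDerivAt_breg_left hΦ q).const_mul (1 / η))
  simpa using hmin.localize.hasFDerivWithinAt_nonneg hderiv.hasFDerivWithinAt
    (sub_mem_posTangentConeAt_of_segment_subset (hC.segment_subset hp hz))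

theorem mirror_step_three_point (hC : Convex ℝ C) (hΦ : DifferentiableAt ℝ Φ p)
    (hp : p ∈ C) (hz : z ∈ C)
    (hmin : IsMinOn (fun y => c y + (1 / η) * breg Φ y q) C p) :
    c (p - z) ≤ (1 / η) * (breg Φ z q - breg Φ z p - breg Φ p q) := by
  have hopt := mirror_step_optimality hC hΦ hp hz hmin
  rw [← breg_sub_breg_sub_breg] at hopt
  have hneg : c (p - z) = -c (z - p) := by rw [← map_neg, neg_sub]
  linarith

theorem mirror_step_descent {f : E → ℝ} {β lam : ℝ} (hC : Convex ℝ C)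
    (hΦ : DifferentiableAt ℝ Φ p) (hβ : 0 ≤ β) (hlam : 0 < lam)
    (hp : p ∈ C) (hz : z ∈ C)
    (hsmooth : f p ≤ f q + fderiv ℝ f q (p - q) + β / 2 * ‖p - q‖ ^ 2)
    (hsc : Φ q + fderiv ℝ Φ q (p - q) + lam / 2 * ‖p - q‖ ^ 2 ≤ Φ p)
    (hmin : IsMinOn (fun y => fderiv ℝ f q y + (β / lam) * breg Φ y q) C p) :
    -fderiv ℝ f q (z - q) ≤
      (β / lam) * (breg Φ z q - breg Φ z p) - (f p - f q) := by
  have hthree := mirror_step_three_point (η := lam / β) hC hΦ hp hz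
    (by simpa only [one_div_div] using hmin)
  rw [one_div_div] at hthree
  have habsorb : β / 2 * ‖p - q‖ ^ 2 ≤ (β / lam) * breg Φ p q :=
    calc β / 2 * ‖p - q‖ ^ 2 = (β / lam) * (lam / 2 * ‖p - q‖ ^ 2) := by field_simp
      _ ≤ (β / lam) * breg Φ p q := by gcongr; exact mul_sq_norm_le_breg hsc
  have hsplit : fderiv ℝ f q (z - q) = fderiv ℝ f q (z - p) + fderiv ℝ f q (p - q) := by
    rw [← map_add, sub_add_sub_cancel]
  have hneg : fderiv ℝ f q (p - z) = -fderiv ℝ f q (z - p) := by rw [← map_neg, neg_sub]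
  linarith

end MirrorStep

theorem sum_range_le_of_le_telescope {a b d : ℕ → ℝ} {K : ℝ} {T : ℕ}
    (hstep : ∀ t, a t ≤ K * (d t - d (t + 1)) - b t) (hK : 0 ≤ K) (hdT : 0 ≤ d T) :
    ∑ t ∈ Finset.range T, a t ≤ K * d 0 - ∑ t ∈ Finset.range T, b t := by
  calc ∑ t ∈ Finset.range T, a t
      ≤ ∑ t ∈ Finset.range T, (K * (d t - d (t + 1)) - b t) :=
        Finset.sum_le_sum fun t _ => hstep t
    _ = K * (d 0 - d T) - ∑ t ∈ Finset.range T, b t := by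
        rw [Finset.sum_sub_distrib, ← Finset.mul_sum, Finset.sum_range_sub' d]
    _ ≤ K * d 0 - ∑ t ∈ Finset.range T, b t := by linarith [mul_nonneg hK hdT]

theorem mirror_descent_average_directional_bound_general
    {E : Type*} [NormedAddCommGroup E] [NormedSpace ℝ E]
    (C : Set E) (f Φ : E → ℝ) (β lam η : ℝ) (x : ℕ → E) (xstar : E) (T : ℕ)
    (hC : Convex ℝ C)
    (hsmooth : ∀ a ∈ C, ∀ b ∈ C,
      f b ≤ f a + fderiv ℝ f a (b - a) + β / 2 * ‖b - a‖ ^ 2)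
    (hΦ : Differentiable ℝ Φ)
    (hsc : ∀ a ∈ C, ∀ b ∈ C,
      Φ a + fderiv ℝ Φ a (b - a) + lam / 2 * ‖b - a‖ ^ 2 ≤ Φ b)
    (hβ : 0 < β) (hlam : 0 < lam) (hη : η = lam / β)
    (hx0 : x 0 ∈ C)
    (hstep : ∀ t : ℕ, x (t + 1) ∈ C ∧ ∀ y ∈ C,
      fderiv ℝ f (x t) (x (t + 1)) + (1 / η) * breg Φ (x (t + 1)) (x t) ≤
        fderiv ℝ f (x t) y + (1 / η) * breg Φ y (x t))
    (hxstar : xstar ∈ C) :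
    (1 / (T : ℝ)) * ∑ t ∈ Finset.range T, -(fderiv ℝ f (x t) (xstar - x t)) ≤
      (1 / (T : ℝ)) * (β / lam) * breg Φ xstar (x 0) -
        (1 / (T : ℝ)) * ∑ t ∈ Finset.range T, (f (x (t + 1)) - f (x t)) := by
  subst hη
  simp only [one_div_div] at hstep
  have hxC : ∀ t, x t ∈ C := fun t => Nat.casesOn t hx0 fun t => (hstep t).1
  have hdescent : ∀ t, -fderiv ℝ f (x t) (xstar - x t) ≤
      (β / lam) * (breg Φ xstar (x t) - breg Φ xstar (x (t + 1))) - (f (x (t + 1)) - f (x t)) :=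
    fun t => mirror_step_descent hC (hΦ _) hβ.le hlam (hxC (t + 1)) hxstar
      (hsmooth _ (hxC t) _ (hxC (t + 1))) (hsc _ (hxC t) _ (hxC (t + 1)))
      (isMinOn_iff.2 (hstep t).2)
  have hsum := sum_range_le_of_le_telescope hdescent (div_pos hβ hlam).le
    (breg_nonneg hlam.le (hsc _ (hxC T) _ hxstar))
  have hscaled := mul_le_mul_of_nonneg_left hsum (by positivity : (0 : ℝ) ≤ 1 / T)
  linarith

/-- **Average-iterate bound for mirror descent on smooth functions.**
Let `f` be differentiable and `β`-smooth on a compact convex set `C` in a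
finite-dimensional normed space, `Φ` a differentiable `λ`-strongly convex mirror map, and
`x_0, x_1, …` the mirror descent iterates with learning rate `η = λ/β` (each `x_{t+1}`
minimizes `y ↦ ⟨∇f(x_t), y⟩ + (1/η) D_Φ(y, x_t)` over `C`). Then for any `x^* ∈ C` and
`T ≥ 1`,
`(1/T) Σ_{t<T} (−⟨∇f(x_t), x^* − x_t⟩)
  ≤ (1/T)(β/λ) D_Φ(x^*, x_0) − (1/T) Σ_{t<T} (f(x_{t+1}) − f(x_t))`. -/
theorem mirror_descent_average_directional_bound
    {E : Type*} [NormedAddCommGroup E] [NormedSpace ℝ E] [FiniteDimensional ℝ E]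
    (C : Set E) (f Φ : E → ℝ) (β lam η : ℝ) (x : ℕ → E) (xstar : E) (T : ℕ)
    (hC : Convex ℝ C) (hCcpt : IsCompact C)
    (hf : Differentiable ℝ f)
    (hsmooth : ∀ a ∈ C, ∀ b ∈ C,
      f b ≤ f a + fderiv ℝ f a (b - a) + β / 2 * ‖b - a‖ ^ 2)
    (hΦ : Differentiable ℝ Φ)
    (hsc : ∀ a ∈ C, ∀ b ∈ C,
      Φ a + fderiv ℝ Φ a (b - a) + lam / 2 * ‖b - a‖ ^ 2 ≤ Φ b)
    (hβ : 0 < β) (hlam : 0 < lam) (hη : η = lam / β)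
    (hx0 : x 0 ∈ C)
    (hstep : ∀ t : ℕ, x (t + 1) ∈ C ∧ ∀ y ∈ C,
      fderiv ℝ f (x t) (x (t + 1)) + (1 / η) * breg Φ (x (t + 1)) (x t) ≤
        fderiv ℝ f (x t) y + (1 / η) * breg Φ y (x t))
    (hxstar : xstar ∈ C) (hT : 1 ≤ T) :
    (1 / (T : ℝ)) * ∑ t ∈ Finset.range T, -(fderiv ℝ f (x t) (xstar - x t)) ≤
      (1 / (T : ℝ)) * (β / lam) * breg Φ xstar (x 0) -
        (1 / (T : ℝ)) * ∑ t ∈ Finset.range T, (f (x (t + 1)) - f (x t)) :=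
  mirror_descent_average_directional_bound_general C f Φ β lam η x xstar T hC hsmooth hΦ hsc hβ hlam
    hη hx0 hstep hxstar

end
end

section
/- Let f be a differentiable function on a convex set C in a finite-dimensional real inner product space, let Φ be a differentiable convex mirror map on C with Bregman divergence D_Φ, let η > 0, and let x_{t+1} = argmin_{x ∈ C} ⟨∇f(x_t), x⟩ + (1/η) D_Φ(x, x_t) be one mirror descent step from x_t ∈ C (assume the argmin exists). Then for every x ∈ C, ⟨∇f(x_t), x_{t+1} − x⟩ ≤ (1/η) ( D_Φ(x, x_t) − D_Φ(x, x_{t+1}) − D_Φ(x_{t+1}, x_t) ). -/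
/-!
The minimizer `x₁` of `y ↦ ⟪∇f(x₀), y⟫ + (1/η) D_Φ(y, x₀)` over the convex set `C` satisfies
the first-order optimality condition `0 ≤ ⟪∇f(x₀) + (1/η)(∇Φ(x₁) − ∇Φ(x₀)), x − x₁⟫` for all
`x ∈ C`, and the three-point identity turns `⟪∇Φ(x₁) − ∇Φ(x₀), x − x₁⟫` into
`D_Φ(x, x₀) − D_Φ(x, x₁) − D_Φ(x₁, x₀)`.
-/

noncomputable section

/-- Bregman divergence `D_Φ(x,y) = Φ(x) − Φ(y) − ⟨∇Φ(y), x − y⟩` of a differentiable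
mirror map `Φ` on a real inner product space. -/
def bregGrad {E : Type*} [NormedAddCommGroup E] [InnerProductSpace ℝ E] [CompleteSpace E]
    (Φ : E → ℝ) (x y : E) : ℝ :=
  Φ x - Φ y - inner ℝ (gradient Φ y) (x - y)

open InnerProductSpace
open scoped RealInnerProductSpace Gradient

section

variable {E : Type*} [NormedAddCommGroup E] [InnerProductSpace ℝ E] [CompleteSpace E]

theorem IsMinOn.inner_gradient_sub_nonneg {g : E → ℝ} {g' : E} {s : Set E} {a y : E}
    (hmin : IsMinOn g s a) (hg : HasGradientAt g g' a) (hs : Convex ℝ s) (ha : a ∈ s)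
    (hy : y ∈ s) : 0 ≤ ⟪g', y - a⟫ := by
  simpa using hmin.localize.hasFDerivWithinAt_nonneg
    (hasGradientAt_iff_hasFDerivAt.mp hg).hasFDerivWithinAt
    (sub_mem_posTangentConeAt_of_segment_subset (hs.segment_subset ha hy))

theorem HasGradientAt.inner_add_const_mul {g : E → ℝ} {g' x : E} (hg : HasGradientAt g g' x)
    (a : E) (c : ℝ) : HasGradientAt (fun z => ⟪a, z⟫ + c * g z) (a + c • g') x := by
  rw [hasGradientAt_iff_hasFDerivAt] at hg ⊢
  rw [map_add, map_smul]
  exact (toDual ℝ E a).hasFDerivAt.fun_add (hg.const_mul c) |>.congr_of_eventuallyEq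
    (Filter.Eventually.of_forall fun z => by simp)

theorem hasGradientAt_bregGrad_left {Φ : E → ℝ} {x : E} (hΦ : DifferentiableAt ℝ Φ x) (y : E) :
    HasGradientAt (bregGrad Φ · y) (∇ Φ x - ∇ Φ y) x := by
  rw [hasGradientAt_iff_hasFDerivAt, map_sub, toDual_gradient]
  refine (hΦ.hasFDerivAt.sub_const (Φ y)).fun_sub
    ((toDual ℝ E (∇ Φ y)).hasFDerivAt.sub_const ⟪∇ Φ y, y⟫) |>.congr_of_eventuallyEq
    (Filter.Eventually.of_forall fun z => ?_)
  simp [bregGrad, inner_sub_right]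

theorem bregGrad_three_point (Φ : E → ℝ) (x y z : E) :
    ⟪∇ Φ x - ∇ Φ y, x - z⟫ = bregGrad Φ x y + bregGrad Φ z x - bregGrad Φ z y := by
  have hsplit : z - y = (z - x) + (x - y) := by abel
  simp only [bregGrad, hsplit, inner_add_right, inner_sub_left, ← neg_sub x z, inner_neg_right]
  ring

end

theorem mirror_descent_three_point_general
    {E : Type*} [NormedAddCommGroup E] [InnerProductSpace ℝ E] [FiniteDimensional ℝ E]
    (C : Set E) (f Φ : E → ℝ) (η : ℝ) (x₀ x₁ : E)
    (hC : Convex ℝ C)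
    (hΦ : Differentiable ℝ Φ)
    (hx₁ : x₁ ∈ C)
    (hmin : ∀ y ∈ C,
      (inner ℝ (gradient f x₀) x₁ : ℝ) + (1 / η) * bregGrad Φ x₁ x₀ ≤
        (inner ℝ (gradient f x₀) y : ℝ) + (1 / η) * bregGrad Φ y x₀) :
    ∀ x ∈ C, (inner ℝ (gradient f x₀) (x₁ - x) : ℝ) ≤
      (1 / η) * (bregGrad Φ x x₀ - bregGrad Φ x x₁ - bregGrad Φ x₁ x₀) := by
  intro x hx
  have hopt : 0 ≤ ⟪∇ f x₀ + (1 / η) • (∇ Φ x₁ - ∇ Φ x₀), x - x₁⟫ :=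
    (isMinOn_iff.mpr hmin).inner_gradient_sub_nonneg
      ((hasGradientAt_bregGrad_left (hΦ x₁) x₀).inner_add_const_mul _ _) hC hx₁ hx
  have hthree : bregGrad Φ x x₀ - bregGrad Φ x x₁ - bregGrad Φ x₁ x₀ =
      ⟪∇ Φ x₁ - ∇ Φ x₀, x - x₁⟫ := by
    rw [← neg_sub x₁ x, inner_neg_right, bregGrad_three_point]; ring
  rw [hthree, ← neg_sub x x₁, inner_neg_right]
  rw [inner_add_left, real_inner_smul_left] at hopt
  linarith

/-- **Three-point inequality for one mirror descent step.**
Let `f` be a differentiable function on a convex set `C` in a finite-dimensional real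
inner product space, `Φ` a differentiable convex mirror map on `C`, `η > 0`, and let
`x₁` be a minimizer over `C` of `x ↦ ⟨∇f(x₀), x⟩ + (1/η) D_Φ(x, x₀)` (one mirror descent
step from `x₀ ∈ C`). Then for every `x ∈ C`,
`⟨∇f(x₀), x₁ − x⟩ ≤ (1/η)(D_Φ(x, x₀) − D_Φ(x, x₁) − D_Φ(x₁, x₀))`. -/
theorem mirror_descent_three_point
    {E : Type*} [NormedAddCommGroup E] [InnerProductSpace ℝ E] [FiniteDimensional ℝ E]
    (C : Set E) (f Φ : E → ℝ) (η : ℝ) (x₀ x₁ : E)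
    (hC : Convex ℝ C)
    (hf : Differentiable ℝ f)
    (hΦ : Differentiable ℝ Φ)
    (hΦconv : ConvexOn ℝ C Φ)
    (hη : 0 < η)
    (hx₀ : x₀ ∈ C)
    (hx₁ : x₁ ∈ C)
    (hmin : ∀ y ∈ C,
      (inner ℝ (gradient f x₀) x₁ : ℝ) + (1 / η) * bregGrad Φ x₁ x₀ ≤
        (inner ℝ (gradient f x₀) y : ℝ) + (1 / η) * bregGrad Φ y x₀) :
    ∀ x ∈ C, (inner ℝ (gradient f x₀) (x₁ - x) : ℝ) ≤
      (1 / η) * (bregGrad Φ x x₀ - bregGrad Φ x x₁ - bregGrad Φ x₁ x₀) :=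
  mirror_descent_three_point_general C f Φ η x₀ x₁ hC hΦ hx₁ hmin

end
end
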